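/- For all h₁ ≥ h₂ > 0 one has C₁(h₁,h₂) > 0 and C₆(h₁,h₂) > 0. -/
import Mathlib
set_option maxHeartbeats 1000000


/-- Coefficient `C₂(h)`. -/
noncomputable def C2 (r δ κ γ m₁ m₂ α zα : ℝ) (h : ℝ) : ℝ :=
  (1 - (γ - 1) / γ) / ((m₁ - m₂) * (m₂ - (γ - 1) / γ)) *
    (m₁ * (α * δ - 1) / δ * zα ^ (-m₂) + (m₁ - 1) / r * zα ^ (1 - m₂)) *
    h ^ (1 + γ * (m₂ - 1))

/-- Coefficient `C₅(h)`. -/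
noncomputable def C5 (r δ κ γ m₁ m₂ β zβ : ℝ) (h : ℝ) : ℝ :=
  (1 - (γ - 1) / γ) / ((m₁ - m₂) * (m₁ - (γ - 1) / γ)) *
    (m₂ * (β * δ + 1) / δ * zβ ^ (-m₁) + (1 - m₂) / r * zβ ^ (1 - m₁)) *
    h ^ (1 + γ * (m₁ - 1))

/-- Coefficient `C₃(h)`. -/
noncomputable def C3 (r δ κ γ m₁ m₂ β zβ : ℝ) (h : ℝ) : ℝ :=
  C5 r δ κ γ m₁ m₂ β zβ h +
    2 * ((γ - 1) / γ - 1) / (κ ^ 2 * (m₁ - m₂) * m₁ * (m₁ - 1) * (m₁ - (γ - 1) / γ)) *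
      h ^ (1 + γ * (m₁ - 1))

/-- Coefficient `C₄(h)`. -/
noncomputable def C4 (r δ κ γ m₁ m₂ α zα : ℝ) (h : ℝ) : ℝ :=
  C2 r δ κ γ m₁ m₂ α zα h -
    2 * ((γ - 1) / γ - 1) / (κ ^ 2 * (m₁ - m₂) * m₂ * (m₂ - 1) * (m₂ - (γ - 1) / γ)) *
      h ^ (1 + γ * (m₂ - 1))

/-- Coefficient `C₁(h₁,h₂)`. -/
noncomputable def C1 (r δ κ γ m₁ m₂ β zβ : ℝ) (h₁ h₂ : ℝ) : ℝ :=
  C3 r δ κ γ m₁ m₂ β zβ h₂ +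
    2 * (1 - (γ - 1) / γ) / (κ ^ 2 * (m₁ - m₂) * m₁ * (m₁ - 1) * (m₁ - (γ - 1) / γ)) *
      h₁ ^ (1 + γ * (m₁ - 1))

/-- Coefficient `C₆(h₁,h₂)`. -/
noncomputable def C6 (r δ κ γ m₁ m₂ α zα : ℝ) (h₁ h₂ : ℝ) : ℝ :=
  C4 r δ κ γ m₁ m₂ α zα h₁ -
    2 * (1 - (γ - 1) / γ) / (κ ^ 2 * (m₁ - m₂) * m₂ * (m₂ - 1) * (m₂ - (γ - 1) / γ)) *
      h₂ ^ (1 + γ * (m₂ - 1))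

/-- For all `h₁ ≥ h₂ > 0` one has `C₁(h₁,h₂) > 0` and `C₆(h₁,h₂) > 0`. -/
theorem C1_C6_pos (r δ κ γ m₁ m₂ α β zα zβ : ℝ)
    (hr : 0 < r) (hδ : 0 < δ) (hκ : 0 < κ) (hγ : 0 < γ) (hγ1 : γ ≠ 1)
    (hK : 0 < r + (δ - r) / γ + ((γ - 1) / (2 * γ ^ 2)) * κ ^ 2)
    (hQ1 : κ ^ 2 / 2 * m₁ ^ 2 + (δ - r - κ ^ 2 / 2) * m₁ - δ = 0)
    (hQ2 : κ ^ 2 / 2 * m₂ ^ 2 + (δ - r - κ ^ 2 / 2) * m₂ - δ = 0)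
    (hm1 : 1 < m₁) (hm2 : m₂ < min ((γ - 1) / γ) 0)
    (hα : 0 ≤ α) (hα' : α < 1 / δ) (hβ : 0 ≤ β)
    (hzα : zα ∈ Set.Ioc 0 (1 - α * δ))
    (hzαeq : 2 / (κ ^ 2 * m₁ * (m₁ - 1)) * zα ^ m₁ + zα / r * (m₂ - 1) + m₂ * (α - 1 / δ) = 0)
    (hzβ : zβ ∈ Set.Ici (1 + β * δ))
    (hzβeq : 2 / (κ ^ 2 * m₂ * (m₂ - 1)) * zβ ^ m₂ + zβ / r * (m₁ - 1) - m₁ * (β + 1 / δ) = 0)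
    :
    ∀ h₁ h₂ : ℝ, 0 < h₂ → h₂ ≤ h₁ →
      0 < C1 r δ κ γ m₁ m₂ β zβ h₁ h₂ ∧ 0 < C6 r δ κ γ m₁ m₂ α zα h₁ h₂ := by
  obtain ⟨hzα0, hzα1⟩ := hzα
  have hzβ1 : 1 + β * δ ≤ zβ := hzβ
  have hg1 : (γ - 1) / γ < 1 := by rw [div_lt_one hγ]; linarith
  have h1g : 0 < 1 - (γ - 1) / γ := by linarith
  have hm2g : m₂ < (γ - 1) / γ := lt_of_lt_of_le hm2 (min_le_left _ _)
  have hm20 : m₂ < 0 := lt_of_lt_of_le hm2 (min_le_right _ _)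
  have hm1m2 : 0 < m₁ - m₂ := by linarith
  have hm10 : 0 < m₁ := by linarith
  have h1m2 : 0 < 1 - m₂ := by linarith
  have hm1g : 0 < m₁ - (γ - 1) / γ := by linarith
  have hgm2 : m₂ - (γ - 1) / γ < 0 := by linarith
  have hκ2 : (0:ℝ) < κ ^ 2 := by positivity
  have key : κ ^ 2 * (m₁ - 1) * (1 - m₂) = 2 * r := by
    have h0 : (m₁ - m₂) * (κ ^ 2 * (m₁ - 1) * (1 - m₂) - 2 * r) = 0 := by
      linear_combination (2 * (1 - m₂)) * hQ1 + (2 * (m₁ - 1)) * hQ2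
    rcases mul_eq_zero.1 h0 with h | h
    · linarith
    · linarith
  have hαδ : 0 ≤ α * δ := mul_nonneg hα hδ.le
  have hzαle1 : zα ≤ 1 := by linarith
  have hzβge1 : 1 ≤ zβ := by linarith [mul_nonneg hβ hδ.le]
  have hzβ0 : 0 < zβ := by linarith
  obtain ⟨v, hvdef⟩ : ∃ v, zα ^ m₁ = v := ⟨_, rfl⟩
  obtain ⟨w, hwdef⟩ : ∃ w, zβ ^ m₂ = w := ⟨_, rfl⟩
  rw [hvdef] at hzαeq
  rw [hwdef] at hzβeq
  have hv0 : 0 < v := hvdef ▸ Real.rpow_pos_of_pos hzα0 _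
  have hw0 : 0 < w := hwdef ▸ Real.rpow_pos_of_pos hzβ0 _
  have hvle : v ≤ zα := by
    have := Real.rpow_le_rpow_of_exponent_ge hzα0 hzαle1 hm1.le
    rwa [Real.rpow_one, hvdef] at this
  have hwle : w ≤ 1 := hwdef ▸ Real.rpow_le_one_of_one_le_of_nonpos hzβge1 hm20.le
  have hrne : r ≠ 0 := hr.ne'
  have hδne : δ ≠ 0 := hδ.ne'
  have hκne : κ ≠ 0 := hκ.ne'
  have hm1ne : m₁ ≠ 0 := hm10.ne'
  have hm11ne : m₁ - 1 ≠ 0 := by intro h; linarith [sub_eq_zero.1 h]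
  have hm2ne : m₂ ≠ 0 := hm20.ne
  have hm21ne : m₂ - 1 ≠ 0 := by intro h; linarith [sub_eq_zero.1 h]
  field_simp at hzαeq hzβeq
  -- positivity of the β-side scalar
  have hPβ : 0 < zβ * (m₁ - m₂) - w * (m₁ - 1) := by
    have a1 : 0 ≤ (zβ - 1) * (m₁ - m₂) :=
      mul_nonneg (by linarith) (by linarith)
    have a2 : 0 ≤ (1 - w) * (m₁ - 1) :=
      mul_nonneg (by linarith) (by linarith)
    linarith [a1, a2]
  have h3β : (m₂ * (β * δ + 1) * r + (1 - m₂) * zβ * δ) * (m₁ * κ ^ 2 * (1 - m₂)) =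
      (zβ * (m₁ - m₂) - w * (m₁ - 1)) * (δ * κ ^ 2 * (1 - m₂)) := by
    linear_combination hzβeq + w * δ * key
  have hX : 0 < m₁ * κ ^ 2 * (1 - m₂) := by positivity
  have hY : 0 < δ * κ ^ 2 * (1 - m₂) := by positivity
  have hNβ : 0 < m₂ * (β * δ + 1) * r + (1 - m₂) * zβ * δ := by
    have h := mul_pos hPβ hY
    rw [← h3β] at h
    rcases mul_pos_iff.1 h with ⟨h1, _⟩ | ⟨_, h2⟩
    · exact h1
    · linarith
  have hSβ : 0 < m₂ * (β * δ + 1) / δ + (1 - m₂) * zβ / r := by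
    have e : m₂ * (β * δ + 1) / δ + (1 - m₂) * zβ / r =
        (m₂ * (β * δ + 1) * r + (1 - m₂) * zβ * δ) / (δ * r) := by
      field_simp
      try ring
    rw [e]; exact div_pos hNβ (by positivity)
  -- negativity of the α-side scalar
  have hPα : 0 < zα * (m₁ - m₂) - v * (1 - m₂) := by
    have a1 : 0 < zα * (m₁ - 1) := mul_pos hzα0 (by linarith)
    have a2 : 0 ≤ (zα - v) * (1 - m₂) :=
      mul_nonneg (by linarith) (by linarith)
    linarith [a1, a2]
  have h3α : (m₁ * (α * δ - 1) * r + (m₁ - 1) * zα * δ) * (m₂ * κ ^ 2 * (m₁ - 1)) =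
      (zα * (m₁ - m₂) - v * (1 - m₂)) * (δ * κ ^ 2 * (m₁ - 1)) := by
    linear_combination hzαeq + v * δ * key
  have hXα : m₂ * κ ^ 2 * (m₁ - 1) < 0 :=
    mul_neg_of_neg_of_pos (mul_neg_of_neg_of_pos hm20 hκ2) (by linarith)
  have hYα : 0 < δ * κ ^ 2 * (m₁ - 1) :=
    mul_pos (mul_pos hδ hκ2) (by linarith)
  have hNα : m₁ * (α * δ - 1) * r + (m₁ - 1) * zα * δ < 0 := by
    have h := mul_pos hPα hYα
    rw [← h3α] at h
    rcases mul_pos_iff.1 h with ⟨_, h1⟩ | ⟨h2, _⟩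
    · linarith
    · exact h2
  have hSα : m₁ * (α * δ - 1) / δ + (m₁ - 1) * zα / r < 0 := by
    have e : m₁ * (α * δ - 1) / δ + (m₁ - 1) * zα / r =
        (m₁ * (α * δ - 1) * r + (m₁ - 1) * zα * δ) / (δ * r) := by
      field_simp
      try ring
    rw [e]; exact div_neg_of_neg_of_pos hNα (by positivity)
  -- bracket positivity / negativity
  have hzβm : 0 < zβ ^ m₁ := Real.rpow_pos_of_pos hzβ0 _
  have hzαm : 0 < zα ^ m₂ := Real.rpow_pos_of_pos hzα0 _
  have hBβ : 0 < m₂ * (β * δ + 1) / δ * zβ ^ (-m₁) + (1 - m₂) / r * zβ ^ (1 - m₁) := by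
    have e1 : zβ ^ (-m₁) = (zβ ^ m₁)⁻¹ := Real.rpow_neg hzβ0.le _
    have e2 : zβ ^ (1 - m₁) = zβ * (zβ ^ m₁)⁻¹ := by
      rw [Real.rpow_sub hzβ0, Real.rpow_one, div_eq_mul_inv]
    have e : m₂ * (β * δ + 1) / δ * zβ ^ (-m₁) + (1 - m₂) / r * zβ ^ (1 - m₁) =
        (m₂ * (β * δ + 1) / δ + (1 - m₂) * zβ / r) * (zβ ^ m₁)⁻¹ := by
      rw [e1, e2]; ring
    rw [e]; exact mul_pos hSβ (inv_pos.2 hzβm)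
  have hBα : m₁ * (α * δ - 1) / δ * zα ^ (-m₂) + (m₁ - 1) / r * zα ^ (1 - m₂) < 0 := by
    have e1 : zα ^ (-m₂) = (zα ^ m₂)⁻¹ := Real.rpow_neg hzα0.le _
    have e2 : zα ^ (1 - m₂) = zα * (zα ^ m₂)⁻¹ := by
      rw [Real.rpow_sub hzα0, Real.rpow_one, div_eq_mul_inv]
    have e : m₁ * (α * δ - 1) / δ * zα ^ (-m₂) + (m₁ - 1) / r * zα ^ (1 - m₂) =
        (m₁ * (α * δ - 1) / δ + (m₁ - 1) * zα / r) * (zα ^ m₂)⁻¹ := by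
      rw [e1, e2]; ring
    rw [e]; exact mul_neg_of_neg_of_pos hSα (inv_pos.2 hzαm)
  intro h₁ h₂ hh2 hle
  have hh1 : 0 < h₁ := lt_of_lt_of_le hh2 hle
  have hp : (0:ℝ) ≤ 1 + γ * (m₁ - 1) := by
    have := mul_nonneg hγ.le (by linarith : (0:ℝ) ≤ m₁ - 1)
    linarith
  have hq : 1 + γ * (m₂ - 1) ≤ 0 := by
    have h := (lt_div_iff₀ hγ).1 hm2g
    have e : γ * (m₂ - 1) = m₂ * γ - γ := by ring
    linarith
  have hmono1 : h₂ ^ (1 + γ * (m₁ - 1)) ≤ h₁ ^ (1 + γ * (m₁ - 1)) :=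
    Real.rpow_le_rpow hh2.le hle hp
  have hmono2 : h₁ ^ (1 + γ * (m₂ - 1)) ≤ h₂ ^ (1 + γ * (m₂ - 1)) :=
    Real.rpow_le_rpow_of_nonpos hh2 hle hq
  have hpos1 : 0 < h₂ ^ (1 + γ * (m₁ - 1)) := Real.rpow_pos_of_pos hh2 _
  have hpos2 : 0 < h₁ ^ (1 + γ * (m₂ - 1)) := Real.rpow_pos_of_pos hh1 _
  constructor
  · -- C1 positive
    have hP5 : 0 < (1 - (γ - 1) / γ) / ((m₁ - m₂) * (m₁ - (γ - 1) / γ)) :=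
      div_pos h1g (mul_pos hm1m2 hm1g)
    have hcoef : 0 < 2 * (1 - (γ - 1) / γ) /
        (κ ^ 2 * (m₁ - m₂) * m₁ * (m₁ - 1) * (m₁ - (γ - 1) / γ)) := by
      apply div_pos (by linarith)
      have : (0:ℝ) < m₁ - 1 := by linarith
      positivity
    have expand : C1 r δ κ γ m₁ m₂ β zβ h₁ h₂ =
        (1 - (γ - 1) / γ) / ((m₁ - m₂) * (m₁ - (γ - 1) / γ)) *
          (m₂ * (β * δ + 1) / δ * zβ ^ (-m₁) + (1 - m₂) / r * zβ ^ (1 - m₁)) *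
          h₂ ^ (1 + γ * (m₁ - 1)) +
        2 * (1 - (γ - 1) / γ) / (κ ^ 2 * (m₁ - m₂) * m₁ * (m₁ - 1) * (m₁ - (γ - 1) / γ)) *
          (h₁ ^ (1 + γ * (m₁ - 1)) - h₂ ^ (1 + γ * (m₁ - 1))) := by
      simp only [C1, C3, C5]; ring
    rw [expand]
    have t1 := mul_pos (mul_pos hP5 hBβ) hpos1
    have t2 : 0 ≤ 2 * (1 - (γ - 1) / γ) /
        (κ ^ 2 * (m₁ - m₂) * m₁ * (m₁ - 1) * (m₁ - (γ - 1) / γ)) *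
        (h₁ ^ (1 + γ * (m₁ - 1)) - h₂ ^ (1 + γ * (m₁ - 1))) :=
      mul_nonneg hcoef.le (by linarith)
    linarith
  · -- C6 positive
    have hPα2 : (1 - (γ - 1) / γ) / ((m₁ - m₂) * (m₂ - (γ - 1) / γ)) < 0 :=
      div_neg_of_pos_of_neg h1g (mul_neg_of_pos_of_neg hm1m2 hgm2)
    have hcoef2 : 2 * (1 - (γ - 1) / γ) /
        (κ ^ 2 * (m₁ - m₂) * m₂ * (m₂ - 1) * (m₂ - (γ - 1) / γ)) < 0 := by
      apply div_neg_of_pos_of_neg (by linarith)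
      have hd1 : 0 < κ ^ 2 * (m₁ - m₂) * m₂ * (m₂ - 1) :=
        mul_pos_of_neg_of_neg (mul_neg_of_pos_of_neg (mul_pos hκ2 hm1m2) hm20) (by linarith)
      exact mul_neg_of_pos_of_neg hd1 hgm2
    have expand : C6 r δ κ γ m₁ m₂ α zα h₁ h₂ =
        (1 - (γ - 1) / γ) / ((m₁ - m₂) * (m₂ - (γ - 1) / γ)) *
          (m₁ * (α * δ - 1) / δ * zα ^ (-m₂) + (m₁ - 1) / r * zα ^ (1 - m₂)) *
          h₁ ^ (1 + γ * (m₂ - 1)) +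
        2 * (1 - (γ - 1) / γ) / (κ ^ 2 * (m₁ - m₂) * m₂ * (m₂ - 1) * (m₂ - (γ - 1) / γ)) *
          (h₁ ^ (1 + γ * (m₂ - 1)) - h₂ ^ (1 + γ * (m₂ - 1))) := by
      simp only [C6, C4, C2]; ring
    rw [expand]
    have t1 : 0 < (1 - (γ - 1) / γ) / ((m₁ - m₂) * (m₂ - (γ - 1) / γ)) *
        (m₁ * (α * δ - 1) / δ * zα ^ (-m₂) + (m₁ - 1) / r * zα ^ (1 - m₂)) *
        h₁ ^ (1 + γ * (m₂ - 1)) :=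
      mul_pos (mul_pos_of_neg_of_neg hPα2 hBα) hpos2
    have t2 : 0 ≤ 2 * (1 - (γ - 1) / γ) /
        (κ ^ 2 * (m₁ - m₂) * m₂ * (m₂ - 1) * (m₂ - (γ - 1) / γ)) *
        (h₁ ^ (1 + γ * (m₂ - 1)) - h₂ ^ (1 + γ * (m₂ - 1))) :=
 by
      have h := mul_nonneg (neg_nonneg.2 hcoef2.le)
        (neg_nonneg.2 (by linarith : h₁ ^ (1 + γ * (m₂ - 1)) - h₂ ^ (1 + γ * (m₂ - 1)) ≤ 0))
      rw [neg_mul_neg] at h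
      exact h
    linarith
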